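/- OF-terms are preserved under instantiation by OF-substitutions: if OF(u) holds and γ maps every variable to an OF-term, then OF(uγ) holds. -/

import Mathlib

/-- Finite first-order terms. -/
inductive Tm (F V : Type) : Type
  | var : V → Tm F V
  | app : F → List (Tm F V) → Tm F V

namespace Tm
variable {F V W : Type}

/-- Application of a substitution to a term. -/
def subst (σ : V → Tm F W) : Tm F V → Tm F W
  | .var x => σ x
  | .app f l => .app f (l.attach.map fun t => t.1.subst σ)
  decreasing_by simp only [Tm.app.sizeOf_spec]; have := List.sizeOf_lt_of_mem t.2; omega

/-- Subterm of `t` at a position (a list of argument indices), if any. -/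
def at? : Tm F V → List ℕ → Option (Tm F V)
  | t, [] => some t
  | .var _, _ :: _ => none
  | .app _ l, i :: p =>
    match l[i]? with
    | some t => t.at? p
    | none => none

mutual
/-- Linearization of a term: the occurrence of a variable `x` at position `p`
is renamed into the fresh variable `(x, p)`. -/
def lin : Tm F V → List ℕ → Tm F (V × List ℕ)
  | .var x, p => .var (x, p)
  | .app f l, p => .app f (linList l p 0)

def linList : List (Tm F V) → List ℕ → ℕ → List (Tm F (V × List ℕ))
  | [], _, _ => []
  | t :: ts, p, i => lin t (p ++ [i]) :: linList ts p (i + 1)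
end

/-- `x` occurs in `t`. -/
inductive HasVar (x : V) : Tm F V → Prop
  | var : HasVar x (.var x)
  | app {f l t} : t ∈ l → HasVar x t → HasVar x (.app f l)

/-- `t` is not a variable. -/
def NonVar (t : Tm F V) : Prop := ∀ z, t ≠ .var z

/-- Reflexive subterm relation. -/
inductive Sub : Tm F V → Tm F V → Prop
  | refl (t) : Sub t t
  | app {s t f l} : t ∈ l → Sub s t → Sub s (.app f l)

end Tm

variable {F V : Type}

/-- Plain one-step rewriting with the rewrite system `R` (rules instantiated by
substitutions, closure under contexts). -/
inductive Rw (R : Set (Tm F V × Tm F V)) : Tm F V → Tm F V → Prop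
  | rule {l r} (σ : V → Tm F V) : (l, r) ∈ R →
      Rw R (l.subst σ) (r.subst σ)
  | app (f : F) (pre post : List (Tm F V)) {s t} :
      Rw R s t → Rw R (.app f (pre ++ s :: post)) (.app f (pre ++ t :: post))

/-- `Shape rel l u v`: `u` rewrites to `v` (by `rel`-derivations) using steps
occurring only strictly below the non-variable positions of the pattern `l`,
i.e. `u` and `v` coincide with `l` at its non-variable positions and at each
variable position of `l` the subterm of `u` rewrites to that of `v`. -/
inductive Shape (rel : Tm F V → Tm F V → Prop) : Tm F V → Tm F V → Tm F V → Prop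
  | var (x : V) {u v : Tm F V} : Relation.ReflTransGen rel u v → Shape rel (.var x) u v
  | app (f : F) (ls us vs : List (Tm F V)) :
      ls.length = us.length → us.length = vs.length →
      (∀ i (h1 : i < ls.length) (h2 : i < us.length) (h3 : i < vs.length),
        Shape rel ls[i] us[i] vs[i]) →
      Shape rel (.app f ls) (.app f us) (.app f vs)

/-- Sub-rewriting: `u` sub-rewrites to `v` at some position `p` with rule
`l → r` if `u` rewrites (strictly below `p·FPos(l)`) to `u[lθ]_p` and
`v = u[rθ]_p`. -/
inductive SubRw (R : Set (Tm F V × Tm F V)) : Tm F V → Tm F V → Prop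
  | rule {l r u} (σ : V → Tm F V) : (l, r) ∈ R →
      Shape (Rw R) l u (l.subst σ) → SubRw R u (r.subst σ)
  | app (f : F) (pre post : List (Tm F V)) {s t} :
      SubRw R s t → SubRw R (.app f (pre ++ s :: post)) (.app f (pre ++ t :: post))

/-- `v` is overlap-free (OF): no non-variable subterm of the linearization of
`v` unifies with a (variable-disjoint) linearized left-hand side of `R`. -/
def OF (R : Set (Tm F V × Tm F V)) (v : Tm F V) : Prop :=
  ∀ g d, (g, d) ∈ R → ∀ s, Tm.Sub s (Tm.lin v []) → s.NonVar →
    ∀ σ τ : V × List ℕ → Tm F (V × List ℕ), s.subst σ ≠ (Tm.lin g []).subst τ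


section Aux
variable {F V W X : Type}

theorem subst_app (σ : V → Tm F W) (f : F) (l : List (Tm F V)) :
    (Tm.app f l).subst σ = .app f (l.map (·.subst σ)) := by
  rw [Tm.subst]
  congr 1
  simp [List.attach_map_val]

end Aux

section Aux2
variable {F V W X : Type}

theorem subst_subst (δ : V → Tm F W) (σ : W → Tm F X) :
    ∀ t : Tm F V, (t.subst δ).subst σ = t.subst (fun x => (δ x).subst σ)
  | .var x => by rw [Tm.subst, Tm.subst]
  | .app f l => by
    rw [subst_app, subst_app, subst_app, List.map_map]
    congr 1
    apply List.map_congr_left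
    intro t ht
    exact subst_subst δ σ t
  decreasing_by simp only [Tm.app.sizeOf_spec]; have := List.sizeOf_lt_of_mem ht; omega

theorem lin_app (f : F) (l : List (Tm F V)) (p : List ℕ) :
    Tm.lin (Tm.app f l) p = .app f (Tm.linList l p 0) := by rw [Tm.lin]

mutual
theorem lin_subst (γ : V → Tm F V) :
    ∀ (t : Tm F V) (p : List ℕ),
      Tm.lin (t.subst γ) p = (Tm.lin t p).subst (fun v => Tm.lin (γ v.1) v.2)
  | .var x, p => by rw [Tm.subst, Tm.lin, Tm.subst]
  | .app f l, p => by
    rw [subst_app, lin_app, lin_app, subst_app, linList_subst γ l p 0]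

theorem linList_subst (γ : V → Tm F V) :
    ∀ (l : List (Tm F V)) (p : List ℕ) (i : ℕ),
      Tm.linList (l.map (·.subst γ)) p i
        = (Tm.linList l p i).map (·.subst (fun v => Tm.lin (γ v.1) v.2))
  | [], p, i => by simp only [List.map_nil, Tm.linList]
  | t :: ts, p, i => by
    simp only [List.map_cons, Tm.linList]
    rw [lin_subst γ t (p ++ [i]), linList_subst γ ts p (i + 1)]
end

mutual
theorem lin_shift :
    ∀ (t : Tm F V) (p q : List ℕ),
      Tm.lin t (p ++ q) = (Tm.lin t q).subst (fun v => .var (v.1, p ++ v.2))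
  | .var x, p, q => by rw [Tm.lin, Tm.lin, Tm.subst]
  | .app f l, p, q => by
    rw [lin_app, lin_app, subst_app, linList_shift l p q 0]

theorem linList_shift :
    ∀ (l : List (Tm F V)) (p q : List ℕ) (i : ℕ),
      Tm.linList l (p ++ q) i
        = (Tm.linList l q i).map (·.subst (fun v => Tm.var (v.1, p ++ v.2)))
  | [], p, q, i => by simp only [Tm.linList, List.map_nil]
  | t :: ts, p, q, i => by
    simp only [Tm.linList, List.map_cons]
    rw [List.append_assoc,
      lin_shift t p (q ++ [i]), linList_shift ts p q (i + 1)]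
end

end Aux2


theorem sub_subst_decomp {F V W : Type} (δ : V → Tm F W) {s : Tm F W} {t : Tm F V}
    (h : Tm.Sub s (t.subst δ)) :
    (∃ s₀, Tm.Sub s₀ t ∧ s = s₀.subst δ) ∨ (∃ x, Tm.Sub s (δ x)) := by
  generalize hw : t.subst δ = w at h
  induction h generalizing t with
  | refl => exact Or.inl ⟨t, Tm.Sub.refl t, hw.symm⟩
  | app hmem hsub ih =>
    rename_i t' f l
    cases t with
    | var x =>
      right
      refine ⟨x, ?_⟩
      have hd : δ x = Tm.app f l := by rw [Tm.subst] at hw; exact hw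
      rw [hd]
      exact Tm.Sub.app hmem hsub
    | app f₀ l₀ =>
      rw [subst_app] at hw
      cases hw
      obtain ⟨t₀, ht₀, rfl⟩ := List.mem_map.1 hmem
      rcases ih rfl with ⟨s₀, hs₀, hs⟩ | ⟨x, hx⟩
      · exact Or.inl ⟨s₀, Tm.Sub.app ht₀ hs₀, hs⟩
      · exact Or.inr ⟨x, hx⟩

theorem caseB {F V : Type} (R : Set (Tm F V × Tm F V)) (t : Tm F V) (hOFt : OF R t)
    {g d : Tm F V} (hgd : (g, d) ∈ R) {s : Tm F (V × List ℕ)} (q : List ℕ)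
    (hsub : Tm.Sub s (Tm.lin t q)) (hnv : s.NonVar)
    (σ τ : V × List ℕ → Tm F (V × List ℕ))
    (heq : s.subst σ = (Tm.lin g []).subst τ) : False := by
  have hq : Tm.lin t q = (Tm.lin t []).subst (fun v => Tm.var (v.1, q ++ v.2)) := by
    rw [← lin_shift, List.append_nil]
  rw [hq] at hsub
  rcases sub_subst_decomp _ hsub with ⟨s₀, hs₀, rfl⟩ | ⟨x, hx⟩
  · cases s₀ with
    | var v => exact hnv _ (by rw [Tm.subst])
    | app f₀ l₀ =>
      rw [subst_subst] at heq
      exact hOFt g d hgd _ hs₀ (fun z hz => by cases hz) _ τ heq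
  · cases hx with
    | refl => exact hnv _ rfl

theorem OF_preserved_by_OF_substitution'
    {F V : Type} (R : Set (Tm F V × Tm F V)) (u : Tm F V) (hOF : OF R u)
    (γ : V → Tm F V) (hγ : ∀ x, OF R (γ x)) :
    OF R (u.subst γ) := by
  intro g d hgd s hsub hnv σ τ heq
  rw [lin_subst] at hsub
  rcases sub_subst_decomp _ hsub with ⟨s₀, hs₀, rfl⟩ | ⟨x, hx⟩
  · cases s₀ with
    | var v =>
      simp only [Tm.subst] at hnv heq
      exact caseB R (γ v.1) (hγ v.1) hgd v.2 (Tm.Sub.refl _) hnv σ τ heq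
    | app f₀ l₀ =>
      rw [subst_subst] at heq
      exact hOF g d hgd _ hs₀ (fun z hz => by cases hz) _ τ heq
  · exact caseB R (γ x.1) (hγ x.1) hgd x.2 hx hnv σ τ heq

/-- OF-terms are preserved under instantiation by
OF-substitutions: if `OF(u)` holds and `γ` maps every variable to an OF-term,
then `OF(uγ)` holds. -/
theorem OF_preserved_by_OF_substitution
    (R : Set (Tm F V × Tm F V)) (u : Tm F V) (hOF : OF R u)
    (γ : V → Tm F V) (hγ : ∀ x, OF R (γ x)) :
    OF R (u.subst γ) :=
  OF_preserved_by_OF_substitution' R u hOF γ hγ
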